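/- Combined uncertainty bound (equation (33) of Proposition 1): Suppose A : ℝⁿ → ℝ^{n×m} is L_A-Lipschitz and bounded by M_A, b : ℝⁿ → ℝⁿ is L_b-Lipschitz and bounded by M_b, and ∇V : ℝⁿ → ℝⁿ is arbitrary. Let a(x) = A(x)ᵀ∇V(x), β(x) = b(x)ᵀ∇V(x), ℓ(x',u') = |a(x')ᵀu' + β(x')|, ε_L(x,x') = ‖x-x'‖₂ · min{‖∇V(x)‖₂, ‖∇V(x')‖₂}, and ε_∞(x,x') = ‖∇V(x) - ∇V(x')‖₂. Then for all x, x', u': |a(x)ᵀu' + β(x)| ≤ ℓ(x',u') + ε_L(x,x')(L_A‖u'‖₂ + L_b) + ε_∞(x,x')(M_A‖u'‖₂ + M_b). -/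
import Mathlib


open scoped RealInnerProductSpace

/-- combined uncertainty bound, equation (33) of Proposition 1.
Here At x represents A(x)ᵀ as a continuous linear map, a(x) = A(x)ᵀ∇V(x),
β(x) = b(x)ᵀ∇V(x), ℓ(x',u') = |a(x')ᵀu' + β(x')|,
ε_L(x,x') = ‖x-x'‖ min(‖∇V x‖, ‖∇V x'‖), ε_∞(x,x') = ‖∇V x - ∇V x'‖. -/
theorem stmt_14 (n m : ℕ)
    (At : EuclideanSpace ℝ (Fin n) →
      (EuclideanSpace ℝ (Fin n) →L[ℝ] EuclideanSpace ℝ (Fin m)))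
    (b gradV : EuclideanSpace ℝ (Fin n) → EuclideanSpace ℝ (Fin n))
    (LA MA Lb Mb : ℝ)
    (hALip : ∀ x y, ‖At x - At y‖ ≤ LA * ‖x - y‖)
    (hABdd : ∀ x, ‖At x‖ ≤ MA)
    (hbLip : ∀ x y, ‖b x - b y‖ ≤ Lb * ‖x - y‖)
    (hbBdd : ∀ x, ‖b x‖ ≤ Mb) :
    ∀ (x x' : EuclideanSpace ℝ (Fin n)) (u' : EuclideanSpace ℝ (Fin m)),
      |⟪At x (gradV x), u'⟫ + ⟪b x, gradV x⟫| ≤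
        |⟪At x' (gradV x'), u'⟫ + ⟪b x', gradV x'⟫|
        + (‖x - x'‖ * min ‖gradV x‖ ‖gradV x'‖) * (LA * ‖u'‖ + Lb)
        + ‖gradV x - gradV x'‖ * (MA * ‖u'‖ + Mb) := by
  intro x x' u'
  set g := gradV x with hg
  set g' := gradV x' with hg'
  -- triangle step
  have tri : |⟪At x g, u'⟫ + ⟪b x, g⟫| ≤
      |⟪At x' g', u'⟫ + ⟪b x', g'⟫|
      + (|⟪At x g - At x' g', u'⟫| + |⟪b x, g⟫ - ⟪b x', g'⟫|) := by
    have e : ⟪At x g, u'⟫ + ⟪b x, g⟫ =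
        (⟪At x' g', u'⟫ + ⟪b x', g'⟫)
        + (⟪At x g - At x' g', u'⟫ + (⟪b x, g⟫ - ⟪b x', g'⟫)) := by
      rw [inner_sub_left]; ring
    rw [e]
    calc |(⟪At x' g', u'⟫ + ⟪b x', g'⟫)
          + (⟪At x g - At x' g', u'⟫ + (⟪b x, g⟫ - ⟪b x', g'⟫))|
        ≤ |⟪At x' g', u'⟫ + ⟪b x', g'⟫|
          + |⟪At x g - At x' g', u'⟫ + (⟪b x, g⟫ - ⟪b x', g'⟫)| := abs_add_le _ _
      _ ≤ _ := by
          gcongr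
          exact abs_add_le _ _
  -- bound on A-difference vector norm
  have hAv : ‖At x g - At x' g'‖ ≤
      LA * ‖x - x'‖ * min ‖g‖ ‖g'‖ + MA * ‖g - g'‖ := by
    rcases le_total ‖g‖ ‖g'‖ with h | h
    · rw [min_eq_left h]
      have e : At x g - At x' g' = (At x - At x') g + At x' (g - g') := by
        simp [ContinuousLinearMap.sub_apply, map_sub]
      rw [e]
      calc ‖(At x - At x') g + At x' (g - g')‖
          ≤ ‖(At x - At x') g‖ + ‖At x' (g - g')‖ := norm_add_le _ _
        _ ≤ ‖At x - At x'‖ * ‖g‖ + ‖At x'‖ * ‖g - g'‖ := by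
            gcongr <;> exact ContinuousLinearMap.le_opNorm _ _
        _ ≤ (LA * ‖x - x'‖) * ‖g‖ + MA * ‖g - g'‖ := by
            gcongr <;> first
              | exact hALip x x'
              | exact hABdd x'
        _ = LA * ‖x - x'‖ * ‖g‖ + MA * ‖g - g'‖ := by ring
    · rw [min_eq_right h]
      have e : At x g - At x' g' = (At x - At x') g' + At x (g - g') := by
        simp [ContinuousLinearMap.sub_apply, map_sub]
      rw [e]
      calc ‖(At x - At x') g' + At x (g - g')‖
          ≤ ‖(At x - At x') g'‖ + ‖At x (g - g')‖ := norm_add_le _ _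
        _ ≤ ‖At x - At x'‖ * ‖g'‖ + ‖At x‖ * ‖g - g'‖ := by
            gcongr <;> exact ContinuousLinearMap.le_opNorm _ _
        _ ≤ (LA * ‖x - x'‖) * ‖g'‖ + MA * ‖g - g'‖ := by
            gcongr <;> first
              | exact hALip x x'
              | exact hABdd x
        _ = LA * ‖x - x'‖ * ‖g'‖ + MA * ‖g - g'‖ := by ring
  have hA : |⟪At x g - At x' g', u'⟫| ≤
      (LA * ‖x - x'‖ * min ‖g‖ ‖g'‖ + MA * ‖g - g'‖) * ‖u'‖ := by
    calc |⟪At x g - At x' g', u'⟫| ≤ ‖At x g - At x' g'‖ * ‖u'‖ :=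
        abs_real_inner_le_norm _ _
      _ ≤ _ := by gcongr
  -- bound on b-difference
  have hB : |⟪b x, g⟫ - ⟪b x', g'⟫| ≤
      Lb * ‖x - x'‖ * min ‖g‖ ‖g'‖ + Mb * ‖g - g'‖ := by
    rcases le_total ‖g‖ ‖g'‖ with h | h
    · rw [min_eq_left h]
      have e : ⟪b x, g⟫ - ⟪b x', g'⟫ = ⟪b x - b x', g⟫ + ⟪b x', g - g'⟫ := by
        rw [inner_sub_left, inner_sub_right]; ring
      rw [e]
      calc |⟪b x - b x', g⟫ + ⟪b x', g - g'⟫|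
          ≤ |⟪b x - b x', g⟫| + |⟪b x', g - g'⟫| := abs_add_le _ _
        _ ≤ ‖b x - b x'‖ * ‖g‖ + ‖b x'‖ * ‖g - g'‖ := by
            gcongr <;> exact abs_real_inner_le_norm _ _
        _ ≤ (Lb * ‖x - x'‖) * ‖g‖ + Mb * ‖g - g'‖ := by
            gcongr <;> first
              | exact hbLip x x'
              | exact hbBdd x'
        _ = Lb * ‖x - x'‖ * ‖g‖ + Mb * ‖g - g'‖ := by ring
    · rw [min_eq_right h]
      have e : ⟪b x, g⟫ - ⟪b x', g'⟫ = ⟪b x - b x', g'⟫ + ⟪b x, g - g'⟫ := by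
        rw [inner_sub_left, inner_sub_right]; ring
      rw [e]
      calc |⟪b x - b x', g'⟫ + ⟪b x, g - g'⟫|
          ≤ |⟪b x - b x', g'⟫| + |⟪b x, g - g'⟫| := abs_add_le _ _
        _ ≤ ‖b x - b x'‖ * ‖g'‖ + ‖b x‖ * ‖g - g'‖ := by
            gcongr <;> exact abs_real_inner_le_norm _ _
        _ ≤ (Lb * ‖x - x'‖) * ‖g'‖ + Mb * ‖g - g'‖ := by
            gcongr <;> first
              | exact hbLip x x'
              | exact hbBdd x
        _ = Lb * ‖x - x'‖ * ‖g'‖ + Mb * ‖g - g'‖ := by ring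
  have expand : (‖x - x'‖ * min ‖g‖ ‖g'‖) * (LA * ‖u'‖ + Lb)
      + ‖g - g'‖ * (MA * ‖u'‖ + Mb)
      = (LA * ‖x - x'‖ * min ‖g‖ ‖g'‖ + MA * ‖g - g'‖) * ‖u'‖
        + (Lb * ‖x - x'‖ * min ‖g‖ ‖g'‖ + Mb * ‖g - g'‖) := by ring
  linarith [hA, hB, tri]
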